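/- The first three discretized Keiper coefficients have the explicit values Λ_1 = (3/2)·log(π/3), Λ_2 = (5/24)·log( (2/5)^7 · 3^{11} / π^4 ), and Λ_3 = (21/80)·log( 5^{25}·π^8 / (2^3·(3^2·7)^{11}) ). -/

import Mathlib

open Complex Finset Real

/-- The completed zeta function `2ξ(x) := x(x-1)·π^(-x/2)·Γ(x/2)·ζ(x)`. -/
noncomputable def twoXi (x : ℂ) : ℂ :=
  x * (x - 1) * (Real.pi : ℂ) ^ (-x / 2) * Complex.Gamma (x / 2) * riemannZeta x

/-- The coefficient `A_{nm} := Γ(n+m+1/2) / ((2m-1)·(n-m)!·m!·Γ(m+1/2))`. -/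
noncomputable def Acoef (n m : ℕ) : ℝ :=
  Real.Gamma ((n : ℝ) + m + 1 / 2) /
    ((2 * (m : ℝ) - 1) * (Nat.factorial (n - m) : ℝ) * (Nat.factorial m : ℝ) *
      Real.Gamma ((m : ℝ) + 1 / 2))

/-- The discretized Keiper coefficient
`Λ_n := (-1)^n · Σ_{m=1}^n (-1)^m · A_{nm} · log(2ξ(2m))` (real logarithm; the values
`2ξ(2m)` are real and positive). -/
noncomputable def LambdaSeq (n : ℕ) : ℝ :=
  (-1 : ℝ) ^ n * ∑ m ∈ Finset.Icc 1 n, (-1 : ℝ) ^ m * Acoef n m *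
    Real.log ((twoXi (2 * m)).re)

/-! Euler's formula `ζ(2k) = (-1)^(k+1) 2^(2k-1) π^(2k) B_{2k} / (2k)!` together with
`Γ(k) = (k-1)!` makes `2ξ(2k)` a rational multiple of `π^k`, and Legendre's
`Γ(k + 1/2) = (2k-1)‼ √π / 2^k` makes every `A_{nm}` rational. Hence `Λ_n` is an explicit
rational combination of `log π` and logarithms of primes, which for `n ≤ 3` is compared
coefficientwise with the claimed closed forms. -/

open scoped Nat

theorem bernoulli_four : bernoulli 4 = -1 / 30 := by
  rw [bernoulli, bernoulli'_four]; norm_num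

theorem bernoulli_six : bernoulli 6 = 1 / 42 := by
  rw [bernoulli, bernoulli'_def]
  norm_num [sum_range_succ, Nat.choose_eq_factorial_div_factorial, Nat.factorial,
    bernoulli'_eq_zero_of_odd (show Odd 5 by decide)]

theorem Acoef_eq (n m : ℕ) :
    Acoef n m = (2 * (n + m) - 1 : ℕ)‼ /
      ((2 * m - 1 : ℕ)‼ * 2 ^ n * (2 * m - 1) * (n - m)! * m !) := by
  have h := Real.Gamma_nat_add_half (n + m)
  push_cast at h
  have : √π ≠ 0 := by positivity
  rw [Acoef, h, Real.Gamma_nat_add_half m]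
  field_simp
  ring

theorem twoXi_two_mul_nat {k : ℕ} (hk : k ≠ 0) :
    twoXi (2 * k) = ((-1) ^ (k + 1) * 2 ^ (2 * k - 1) * (k - 1)! * π ^ k *
      bernoulli (2 * k) / (2 * k - 2)! : ℝ) := by
  obtain ⟨j, rfl⟩ := Nat.exists_eq_add_one_of_ne_zero hk
  have hΓ : Complex.Gamma (2 * ((j + 1 : ℕ) : ℂ) / 2) = j ! := by
    rw [← Complex.Gamma_nat_eq_factorial]; push_cast; ring_nf
  have hπ : (π : ℂ) ^ (-(2 * ((j + 1 : ℕ) : ℂ)) / 2) = ((π : ℂ) ^ (j + 1))⁻¹ := by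
    rw [show -(2 * ((j + 1 : ℕ) : ℂ)) / 2 = -((j + 1 : ℕ) : ℂ) by ring, Complex.cpow_neg,
      Complex.cpow_natCast]
  have hfact : ((2 * (j + 1))! : ℂ) = (2 * j + 2) * (2 * j + 1) * (2 * j)! := by
    rw [show 2 * (j + 1) = (2 * j + 1) + 1 by ring, Nat.factorial_succ, Nat.factorial_succ]
    push_cast; ring
  rw [twoXi, hΓ, hπ, riemannZeta_two_mul_nat hk, hfact]
  simp only [Nat.add_sub_cancel, show 2 * (j + 1) - 2 = 2 * j by omega]
  have : (π : ℂ) ≠ 0 := by exact_mod_cast pi_ne_zero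
  have : ((2 * j)! : ℂ) ≠ 0 := by exact_mod_cast (2 * j).factorial_ne_zero
  have : (2 * j + 1 : ℂ) ≠ 0 := by exact_mod_cast (2 * j).succ_ne_zero
  push_cast
  field_simp
  ring

theorem re_twoXi_two_mul_nat {k : ℕ} (hk : k ≠ 0) :
    (twoXi (2 * k)).re = (-1) ^ (k + 1) * 2 ^ (2 * k - 1) * (k - 1)! * π ^ k *
      bernoulli (2 * k) / (2 * k - 2)! := by
  rw [twoXi_two_mul_nat hk, Complex.ofReal_re]

theorem re_twoXi_two : (twoXi 2).re = π / 3 := by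
  have h := re_twoXi_two_mul_nat one_ne_zero
  norm_num at h
  rw [h]; ring

theorem re_twoXi_four : (twoXi 4).re = 2 * π ^ 2 / 15 := by
  have h := re_twoXi_two_mul_nat two_ne_zero
  norm_num [bernoulli_four, Nat.factorial] at h
  rw [h]; ring

theorem re_twoXi_six : (twoXi 6).re = 4 * π ^ 3 / 63 := by
  have h := re_twoXi_two_mul_nat three_ne_zero
  norm_num [bernoulli_six, Nat.factorial] at h
  rw [h]; ring

theorem log_re_twoXi_two : Real.log (twoXi 2).re = Real.log π - Real.log 3 := by
  rw [re_twoXi_two, Real.log_div (by positivity) (by positivity)]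

theorem log_re_twoXi_four :
    Real.log (twoXi 4).re = Real.log 2 + 2 * Real.log π - Real.log 3 - Real.log 5 := by
  rw [re_twoXi_four, show (15 : ℝ) = 3 * 5 by norm_num]
  simp (disch := positivity) only [Real.log_mul, Real.log_div, Real.log_pow]
  ring

theorem log_re_twoXi_six :
    Real.log (twoXi 6).re = 2 * Real.log 2 + 3 * Real.log π - 2 * Real.log 3 - Real.log 7 := by
  rw [re_twoXi_six, show (4 : ℝ) = 2 ^ 2 by norm_num, show (63 : ℝ) = 3 ^ 2 * 7 by norm_num]
  simp (disch := positivity) only [Real.log_mul, Real.log_div, Real.log_pow]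
  ring

theorem stmt_7 :
    LambdaSeq 1 = 3 / 2 * Real.log (Real.pi / 3) ∧
    LambdaSeq 2 = 5 / 24 * Real.log ((2 / 5) ^ 7 * 3 ^ 11 / Real.pi ^ 4) ∧
    LambdaSeq 3 = 21 / 80 * Real.log (5 ^ 25 * Real.pi ^ 8 / (2 ^ 3 * (3 ^ 2 * 7) ^ 11)) := by
  refine ⟨?_, ?_, ?_⟩ <;> rw [LambdaSeq]
  all_goals
    repeat rw [Finset.sum_Icc_succ_top (by norm_num)]
    simp (disch := positivity) only [Real.log_mul, Real.log_div, Real.log_pow]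
    norm_num [Acoef_eq, Nat.doubleFactorial, Nat.factorial, log_re_twoXi_two, log_re_twoXi_four,
      log_re_twoXi_six]
  all_goals ring
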